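/- Let G be a groupoid, A a semigroup of Y-valued partial functions with subsets S (bisection domains), C (domains in G^iso), Z (central diagonal), N (isosection domains). If n ∈ N and there exist s, t ∈ S with stn = n = nts, tn, nt ∈ C and st, ts ∈ Z, then n normalises Z: nZ = Zn. -/
import Mathlib


/-- A groupoid modelled as a set with a partially defined (Option-valued)
multiplication and an involution. -/
structure Gpd (G : Type*) where
  mul : G → G → Option G
  inv : G → G
  inv_inv : ∀ g, inv (inv g) = g
  inv_mul_isSome : ∀ g, (mul (inv g) g).isSome
  defined_iff : ∀ g h, (mul g h).isSome ↔ mul (inv g) g = mul h (inv h)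
  massoc : ∀ {g h k gh hk}, mul g h = some gh → mul h k = some hk →
      mul gh k = mul g hk
  inv_mul_cancel : ∀ {g h gh}, mul g h = some gh → mul (inv g) gh = some h
  mul_inv_cancel : ∀ {g h gh}, mul g h = some gh → mul gh (inv h) = some g
  mul_src : ∀ {g u}, mul (inv g) g = some u → mul g u = some g
  rng_mul : ∀ {g u}, mul g (inv g) = some u → mul u g = some g

namespace Gpd

variable {G Y : Type*} (𝒢 : Gpd G)

/-- The source `s(g) = g⁻¹g`. -/
def src (g : G) : G := (𝒢.mul (𝒢.inv g) g).getD g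

/-- The range `r(g) = gg⁻¹`. -/
def rng (g : G) : G := (𝒢.mul g (𝒢.inv g)).getD g

/-- The unit space `G⁰`. -/
def unitSpace : Set G := Set.range 𝒢.src

/-- The isotropy `G^iso`. -/
def iso : Set G := {g | 𝒢.src g = 𝒢.rng g}

/-- Bisections. -/
def IsBisection (B : Set G) : Prop :=
  ∀ g ∈ B, ∀ h ∈ B, (𝒢.src g = 𝒢.src h ∨ 𝒢.rng g = 𝒢.rng h) → g = h

/-- Isosections. -/
def IsIsosection (I : Set G) : Prop :=
  ∀ g ∈ I, ∀ h ∈ I, (𝒢.src g = 𝒢.src h ↔ 𝒢.rng g = 𝒢.rng h)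

/-- Product of subsets. -/
def setMul (A B : Set G) : Set G := {x | ∃ g ∈ A, ∃ h ∈ B, 𝒢.mul g h = some x}

/-- Inverse of a subset. -/
def setInv (A : Set G) : Set G := 𝒢.inv '' A

end Gpd

/-- The domain of a `Y`-valued partial function on `G`. -/
def pdom {G Y : Type*} (a : G → Option Y) : Set G := {g | (a g).isSome}

open Classical in
/-- The product of partial functions, `ab(gh) = a(g)b(h)` on factorizations
(well-defined when a domain is a bisection; defined by choice in general). -/
noncomputable def Gpd.convProd {G Y : Type*} [Mul Y] (𝒢 : Gpd G)
    (a b : G → Option Y) : G → Option Y := fun x =>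
  if h : ∃ p : Y × Y, ∃ g k : G, a g = some p.1 ∧ b k = some p.2 ∧ 𝒢.mul g k = some x
  then some (h.choose.1 * h.choose.2) else none

/-- The set `[Y^×]a` where the function takes invertible values. -/
def unitsPre {G Y : Type*} [Monoid Y] (a : G → Option Y) : Set G :=
  {g | ∃ y, a g = some y ∧ IsUnit y}

/-- The set `[1]a` where the function takes the value `1`. -/
def onePre {G Y : Type*} [Monoid Y] (a : G → Option Y) : Set G :=
  {g | a g = some (1 : Y)}

/-- A unital semigroup is `1`-cancellative if `xy = x ↔ y = 1 ↔ yx = x`. -/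
def OneCancellative (Y : Type*) [Monoid Y] : Prop :=
  ∀ x y : Y, (x * y = x ↔ y = 1) ∧ (y * x = x ↔ y = 1)

/-- The domination relation `a ≺_s b` relative to a diagonal `D`. -/
def precS {α : Type*} (m : α → α → α) (D : Set α) (a s b : α) : Prop :=
  m (m a s) b = a ∧ m (m b s) a = a ∧ m a s ∈ D ∧ m s a ∈ D

/-- Étale: inversion and multiplication continuous, source a local homeomorphism. -/
def Gpd.Etale {G : Type*} [TopologicalSpace G] (𝒢 : Gpd G) : Prop :=
  Continuous 𝒢.inv ∧
  Continuous (fun p : {p : G × G // (𝒢.mul p.1 p.2).isSome} =>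
    (𝒢.mul p.val.1 p.val.2).get p.property) ∧
  IsLocalHomeomorph 𝒢.src

/-- Ample: étale with a basis of compact open bisections. -/
def Gpd.Ample {G : Type*} [TopologicalSpace G] (𝒢 : Gpd G) : Prop :=
  𝒢.Etale ∧ TopologicalSpace.IsTopologicalBasis
    {O : Set G | IsCompact O ∧ IsOpen O ∧ 𝒢.IsBisection O}

/-- Bumpy semigroups of `Y`-valued functions on open bisections. -/
structure Gpd.IsBumpy {G Y : Type*} [TopologicalSpace G] [Monoid Y] (𝒢 : Gpd G)
    (S : Set (G → Option Y)) : Prop where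
  domBisection : ∀ a ∈ S, 𝒢.IsBisection (pdom a)
  domOpen : ∀ a ∈ S, IsOpen (pdom a)
  mulClosed : ∀ a ∈ S, ∀ b ∈ S, 𝒢.convProd a b ∈ S
  oneProper : ∀ a ∈ S, IsCompact (onePre a)
  empty_mem : (fun _ => (none : Option Y)) ∈ S
  urysohn : ∀ O : Set G, IsOpen O → ∀ g ∈ O, ∃ a ∈ S,
    pdom a ⊆ O ∧ g ∈ interior (unitsPre a)
  involutive : ∀ a ∈ S, ∀ g ∈ interior (unitsPre a), ∃ b ∈ S,
    𝒢.inv g ∈ interior {h | ∃ y z, a (𝒢.inv h) = some y ∧ b h = some z ∧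
      y * z = 1 ∧ z * y = 1}

/-- Compact-bumpy semigroups. -/
structure Gpd.IsCompactBumpy {G Y : Type*} [TopologicalSpace G] [Monoid Y] (𝒢 : Gpd G)
    (S : Set (G → Option Y)) : Prop where
  bumpy : 𝒢.IsBumpy S
  compactUrysohn : ∀ C O : Set G, IsCompact C → 𝒢.IsBisection C → IsOpen O →
    𝒢.IsBisection O → C ⊆ O → ∃ a ∈ S, pdom a ⊆ O ∧ C ⊆ unitsPre a
  compactInvolutive : ∀ a ∈ S, ∀ C ⊆ unitsPre a, IsCompact C → ∃ b ∈ S,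
    ∀ g ∈ C, ∃ y z, a g = some y ∧ b (𝒢.inv g) = some z ∧ y * z = 1 ∧ z * y = 1


namespace Gpd

section Aux

variable {G : Type*} (𝒢 : Gpd G)

lemma unit_core {u : G} (hu : u ∈ 𝒢.unitSpace) :
    𝒢.mul u u = some u ∧ 𝒢.inv u = u := by
  obtain ⟨g, hg⟩ := hu
  obtain ⟨u', hu'⟩ := Option.isSome_iff_exists.mp (𝒢.inv_mul_isSome g)
  have hgu : 𝒢.src g = u := hg
  rw [Gpd.src, hu', Option.getD_some] at hgu
  subst hgu
  have h2 := 𝒢.mul_inv_cancel hu'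
  have h3 := 𝒢.inv_mul_cancel h2
  have h4 := 𝒢.mul_inv_cancel h3
  rw [𝒢.inv_inv] at h4
  have hinv : 𝒢.inv u' = u' := by
    have := hu'.symm.trans h4
    exact (Option.some_injective _ this).symm
  have h5 := 𝒢.mul_src hu'
  have h6 : (𝒢.mul u' u').isSome := by
    rw [𝒢.defined_iff, hinv]
  obtain ⟨w, hw⟩ := Option.isSome_iff_exists.mp h6
  have h7 := 𝒢.massoc h5 hw
  rw [h5] at h7
  have h8 := 𝒢.inv_mul_cancel h7.symm
  rw [hu'] at h8
  have : u' = w := Option.some_injective _ h8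
  subst this
  exact ⟨hw, hinv⟩

lemma src_unit {u : G} (hu : u ∈ 𝒢.unitSpace) : 𝒢.src u = u := by
  obtain ⟨hm, hi⟩ := 𝒢.unit_core hu
  rw [Gpd.src, hi, hm, Option.getD_some]

lemma rng_unit {u : G} (hu : u ∈ 𝒢.unitSpace) : 𝒢.rng u = u := by
  obtain ⟨hm, hi⟩ := 𝒢.unit_core hu
  rw [Gpd.rng, hi, hm, Option.getD_some]

lemma mul_src' (x : G) : 𝒢.mul x (𝒢.src x) = some x := by
  obtain ⟨u, hu⟩ := Option.isSome_iff_exists.mp (𝒢.inv_mul_isSome x)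
  have : 𝒢.src x = u := by rw [Gpd.src, hu, Option.getD_some]
  rw [this]
  exact 𝒢.mul_src hu

lemma rng_mul' (x : G) : 𝒢.mul (𝒢.rng x) x = some x := by
  have h := 𝒢.inv_mul_isSome (𝒢.inv x)
  rw [𝒢.inv_inv] at h
  obtain ⟨v, hv⟩ := Option.isSome_iff_exists.mp h
  have : 𝒢.rng x = v := by rw [Gpd.rng, hv, Option.getD_some]
  rw [this]
  exact 𝒢.rng_mul hv

lemma unit_mul_right {g k x : G} (hk : k ∈ 𝒢.unitSpace)
    (h : 𝒢.mul g k = some x) : x = g ∧ 𝒢.src g = k := by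
  obtain ⟨hm, hi⟩ := 𝒢.unit_core hk
  have hd : (𝒢.mul g k).isSome := by rw [h]; rfl
  have he := (𝒢.defined_iff g k).mp hd
  rw [hi, hm] at he
  have hx := 𝒢.mul_src he
  rw [h] at hx
  exact ⟨Option.some_injective _ hx, by rw [Gpd.src, he, Option.getD_some]⟩

lemma unit_mul_left {g k x : G} (hk : k ∈ 𝒢.unitSpace)
    (h : 𝒢.mul k g = some x) : x = g ∧ 𝒢.rng g = k := by
  obtain ⟨hm, hi⟩ := 𝒢.unit_core hk
  have hd : (𝒢.mul k g).isSome := by rw [h]; rfl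
  have he := (𝒢.defined_iff k g).mp hd
  rw [hi, hm] at he
  have hx := 𝒢.rng_mul he.symm
  rw [h] at hx
  exact ⟨Option.some_injective _ hx, by rw [Gpd.rng, ← he, Option.getD_some]⟩

lemma src_prod' {g k x : G} (h : 𝒢.mul g k = some x) : 𝒢.src x = 𝒢.src k := by
  have hg := 𝒢.mul_inv_cancel h
  obtain ⟨u, hu⟩ := Option.isSome_iff_exists.mp (𝒢.inv_mul_isSome k)
  have h2 := 𝒢.massoc hg hu
  rw [h] at h2
  have humem : u ∈ 𝒢.unitSpace := ⟨k, by rw [Gpd.src, hu, Option.getD_some]⟩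
  obtain ⟨hm, hi⟩ := 𝒢.unit_core humem
  have hd := (𝒢.defined_iff x u).mp (by rw [← h2]; rfl)
  rw [hi, hm] at hd
  rw [Gpd.src, Gpd.src, hd, hu, Option.getD_some, Option.getD_some]

lemma rng_prod' {g k x : G} (h : 𝒢.mul g k = some x) : 𝒢.rng x = 𝒢.rng g := by
  have hk2 := 𝒢.inv_mul_cancel h
  have h0 := 𝒢.inv_mul_isSome (𝒢.inv g)
  rw [𝒢.inv_inv] at h0
  obtain ⟨v, hv⟩ := Option.isSome_iff_exists.mp h0
  have h2 := 𝒢.massoc hv hk2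
  rw [h] at h2
  have hvmem : v ∈ 𝒢.unitSpace :=
    ⟨𝒢.inv g, by rw [Gpd.src, 𝒢.inv_inv, hv, Option.getD_some]⟩
  obtain ⟨hm, hi⟩ := 𝒢.unit_core hvmem
  have hd := (𝒢.defined_iff v x).mp (by rw [h2]; rfl)
  rw [hi, hm] at hd
  rw [Gpd.rng, Gpd.rng, ← hd, hv, Option.getD_some, Option.getD_some]

lemma units_bisection {D : Set G} (hD : D ⊆ 𝒢.unitSpace) : 𝒢.IsBisection D := by
  intro g hg h hh hor
  have eg := 𝒢.src_unit (hD hg)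
  have eh := 𝒢.src_unit (hD hh)
  have rg := 𝒢.rng_unit (hD hg)
  have rh := 𝒢.rng_unit (hD hh)
  rcases hor with h1 | h1
  · rw [eg, eh] at h1; exact h1
  · rw [rg, rh] at h1; exact h1

variable {Y : Type*} [Mul Y]

lemma convProd_some_of {a b : G → Option Y} {g k x : G} {y1 y2 : Y}
    (hg : a g = some y1) (hk : b k = some y2) (h : 𝒢.mul g k = some x) :
    ∃ w, 𝒢.convProd a b x = some w := by
  unfold Gpd.convProd
  rw [dif_pos ⟨(y1, y2), g, k, hg, hk, h⟩]
  exact ⟨_, rfl⟩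

lemma convProd_elim {a b : G → Option Y} {x : G} {w : Y}
    (h : 𝒢.convProd a b x = some w) :
    ∃ g k y1 y2, a g = some y1 ∧ b k = some y2 ∧ 𝒢.mul g k = some x ∧
      w = y1 * y2 := by
  unfold Gpd.convProd at h
  split_ifs at h with hc
  obtain ⟨g, k, h1, h2, h3⟩ := hc.choose_spec
  exact ⟨g, k, _, _, h1, h2, h3, (Option.some_injective _ h).symm⟩

lemma convProd_right_units {z : G → Option Y} (hz : pdom z ⊆ 𝒢.unitSpace)
    (a : G → Option Y) (x : G) :
    𝒢.convProd a z x = (a x).bind fun y1 => (z (𝒢.src x)).map fun y2 => y1 * y2 := by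
  by_cases h : ∃ w, 𝒢.convProd a z x = some w
  · obtain ⟨w, hw⟩ := h
    obtain ⟨g, k, y1, y2, h1, h2, h3, rfl⟩ := 𝒢.convProd_elim hw
    have hk : k ∈ 𝒢.unitSpace := hz (Option.isSome_iff_exists.mpr ⟨_, h2⟩)
    obtain ⟨hxg, hsg⟩ := 𝒢.unit_mul_right hk h3
    subst hxg
    rw [hw, h1, hsg, h2]
    rfl
  · have hn : 𝒢.convProd a z x = none := by
      cases hc : 𝒢.convProd a z x with
      | none => rfl
      | some w => exact absurd ⟨w, hc⟩ h
    rw [hn]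
    cases ha : a x with
    | none => rfl
    | some y1 =>
      cases hzx : z (𝒢.src x) with
      | none => rfl
      | some y2 => exact absurd (𝒢.convProd_some_of ha hzx (𝒢.mul_src' x)) h

lemma convProd_left_units {z : G → Option Y} (hz : pdom z ⊆ 𝒢.unitSpace)
    (a : G → Option Y) (x : G) :
    𝒢.convProd z a x = (z (𝒢.rng x)).bind fun y1 => (a x).map fun y2 => y1 * y2 := by
  by_cases h : ∃ w, 𝒢.convProd z a x = some w
  · obtain ⟨w, hw⟩ := h
    obtain ⟨g, k, y1, y2, h1, h2, h3, rfl⟩ := 𝒢.convProd_elim hw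
    have hg : g ∈ 𝒢.unitSpace := hz (Option.isSome_iff_exists.mpr ⟨_, h1⟩)
    obtain ⟨hxk, hrk⟩ := 𝒢.unit_mul_left hg h3
    subst hxk
    rw [hw, hrk, h1, h2]
    rfl
  · have hn : 𝒢.convProd z a x = none := by
      cases hc : 𝒢.convProd z a x with
      | none => rfl
      | some w => exact absurd ⟨w, hc⟩ h
    rw [hn]
    cases hzx : z (𝒢.rng x) with
    | none => rfl
    | some y1 =>
      cases ha : a x with
      | none => rfl
      | some y2 => exact absurd (𝒢.convProd_some_of hzx ha (𝒢.rng_mul' x)) h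

lemma value_unique {a b : G → Option Y} (hab : 𝒢.IsBisection (pdom a))
    {x : G} {w : Y} (hx : 𝒢.convProd a b x = some w) {g k : G} {y1 y2 : Y}
    (hg : a g = some y1) (hk : b k = some y2) (hm : 𝒢.mul g k = some x) :
    w = y1 * y2 := by
  obtain ⟨g₀, k₀, p1, p2, h1, h2, h3, rfl⟩ := 𝒢.convProd_elim hx
  have e1 : 𝒢.rng g₀ = 𝒢.rng g := (𝒢.rng_prod' h3).symm.trans (𝒢.rng_prod' hm)
  have hgg : g₀ = g :=
    hab g₀ (Option.isSome_iff_exists.mpr ⟨_, h1⟩)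
      g (Option.isSome_iff_exists.mpr ⟨_, hg⟩) (Or.inr e1)
  subst hgg
  rw [h1] at hg
  have hp1 : p1 = y1 := Option.some_injective _ hg
  have hkk : k₀ = k :=
    Option.some_injective _ ((𝒢.inv_mul_cancel h3).symm.trans (𝒢.inv_mul_cancel hm))
  subst hkk
  rw [h2] at hk
  rw [hp1, Option.some_injective _ hk]

end Aux

section Semi

variable {G Y : Type*} [Semigroup Y] (𝒢 : Gpd G)

lemma central_comm {z c : G → Option Y} (hz : pdom z ⊆ 𝒢.unitSpace)
    (hzc : ∀ g y, z g = some y → y ∈ Set.center Y)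
    (hc : pdom c ⊆ 𝒢.iso) : 𝒢.convProd c z = 𝒢.convProd z c := by
  funext x
  rw [𝒢.convProd_right_units hz, 𝒢.convProd_left_units hz]
  cases hcx : c x with
  | none => cases z (𝒢.rng x) <;> rfl
  | some y2 =>
    have hx : 𝒢.src x = 𝒢.rng x := hc (Option.isSome_iff_exists.mpr ⟨_, hcx⟩)
    rw [hx]
    cases hzx : z (𝒢.rng x) with
    | none => rfl
    | some y1 =>
      show some (y2 * y1) = some (y1 * y2)
      exact congrArg some ((Set.mem_center_iff.mp (hzc _ _ hzx)).comm y2).symm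

lemma prod_sandwich {s t z : G → Option Y}
    (hsb : 𝒢.IsBisection (pdom s))
    (hzu : pdom z ⊆ 𝒢.unitSpace)
    (hzc : ∀ g y, z g = some y → y ∈ Set.center Y)
    (hstu : pdom (𝒢.convProd s t) ⊆ 𝒢.unitSpace)
    (hstc : ∀ g y, 𝒢.convProd s t g = some y → y ∈ Set.center Y) :
    pdom (𝒢.convProd (𝒢.convProd s z) t) ⊆ 𝒢.unitSpace ∧
    ∀ g y, 𝒢.convProd (𝒢.convProd s z) t g = some y → y ∈ Set.center Y := by
  have key : ∀ x w, 𝒢.convProd (𝒢.convProd s z) t x = some w →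
      x ∈ 𝒢.unitSpace ∧ w ∈ Set.center Y := by
    intro x w hw
    obtain ⟨g, k, y1, y2, h1, h2, h3, rfl⟩ := 𝒢.convProd_elim hw
    rw [𝒢.convProd_right_units hzu] at h1
    cases hs1 : s g with
    | none => rw [hs1] at h1; exact absurd h1 (by simp)
    | some a1 =>
      rw [hs1] at h1
      cases hz1 : z (𝒢.src g) with
      | none => rw [hz1] at h1; exact absurd h1 (by simp)
      | some a2 =>
        rw [hz1] at h1
        have h1' : a1 * a2 = y1 := Option.some_injective _ (show some (a1*a2) = some y1 from h1)
        obtain ⟨w', hw'⟩ := 𝒢.convProd_some_of hs1 h2 h3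
        have hwv : w' = a1 * y2 := 𝒢.value_unique hsb hw' hs1 h2 h3
        refine ⟨hstu (Option.isSome_iff_exists.mpr ⟨_, hw'⟩), ?_⟩
        have ha2 := hzc _ _ hz1
        have hw'c := hstc _ _ hw'
        rw [← h1', mul_assoc, (Set.mem_center_iff.mp ha2).comm y2, ← mul_assoc, ← hwv]
        exact Set.mul_mem_center hw'c ha2
  constructor
  · intro x hx
    obtain ⟨w, hw⟩ := Option.isSome_iff_exists.mp hx
    exact (key x w hw).1
  · intro g y hg
    exact (key g y hg).2

end Semi

end Gpd
/-- if `n ∈ N` is C-Z-dominated by elements of `S`, then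
`n` normalises `Z`: `nZ = Zn`. -/
theorem stmt12 {G Y : Type*} [Semigroup Y] [TopologicalSpace G] (𝒢 : Gpd G)
    (hT2 : T2Space 𝒢.unitSpace)
    (A : Set (G → Option Y))
    (m : (G → Option Y) → (G → Option Y) → (G → Option Y))
    (hclosed : ∀ a ∈ A, ∀ b ∈ A, m a b ∈ A)
    (hassoc : ∀ a ∈ A, ∀ b ∈ A, ∀ c ∈ A, m (m a b) c = m a (m b c))
    (hagree : ∀ a b : G → Option Y,
      (𝒢.IsBisection (pdom a) ∨ 𝒢.IsBisection (pdom b)) → m a b = 𝒢.convProd a b)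
    (S C Z : Set (G → Option Y))
    (hSdef : S = {a ∈ A | 𝒢.IsBisection (pdom a)})
    (hCdef : C = {a ∈ A | pdom a ⊆ 𝒢.iso})
    (hZdef : Z = {a ∈ A | pdom a ⊆ 𝒢.unitSpace ∧ ∀ g y, a g = some y → y ∈ Set.center Y})
    (n : G → Option Y) (hn : n ∈ A) (hniso : 𝒢.IsIsosection (pdom n))
    (s t : G → Option Y) (hs : s ∈ S) (ht : t ∈ S)
    (hstn : m (m s t) n = n) (hnts : m n (m t s) = n)
    (htn : m t n ∈ C) (hnt : m n t ∈ C)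
    (hst : m s t ∈ Z) (hts : m t s ∈ Z) :
    {x | ∃ z ∈ Z, x = m n z} = {x | ∃ z ∈ Z, x = m z n} := by
  subst hSdef hCdef hZdef
  obtain ⟨hsA, hsb⟩ := hs
  obtain ⟨htA, htb⟩ := ht
  obtain ⟨htnA, ctn⟩ := htn
  obtain ⟨hntA, cnt⟩ := hnt
  obtain ⟨hstA, hstu, hstc⟩ := hst
  obtain ⟨htsA, htsu, htsc⟩ := hts
  have mst : m s t = 𝒢.convProd s t := hagree s t (Or.inl hsb)
  have mts : m t s = 𝒢.convProd t s := hagree t s (Or.inl htb)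
  rw [mst] at hstu hstc
  rw [mts] at htsu htsc
  have key1 : ∀ z, z ∈ A → pdom z ⊆ 𝒢.unitSpace →
      (∀ g y, z g = some y → y ∈ Set.center Y) →
      m n z = m (m (m s z) t) n ∧ (m (m s z) t ∈ A ∧
        pdom (m (m s z) t) ⊆ 𝒢.unitSpace ∧
        ∀ g y, (m (m s z) t) g = some y → y ∈ Set.center Y) := by
    intro z hzA hzu hzc
    have hzb := 𝒢.units_bisection hzu
    have htnA' : m t n ∈ A := hclosed t htA n hn
    have hszA : m s z ∈ A := hclosed s hsA z hzA
    have comm : m (m t n) z = m z (m t n) := by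
      rw [hagree _ _ (Or.inr hzb), hagree _ _ (Or.inl hzb)]
      exact 𝒢.central_comm hzu hzc ctn
    have e : m (m s z) t = 𝒢.convProd (𝒢.convProd s z) t := by
      rw [hagree s z (Or.inl hsb), hagree _ t (Or.inr htb)]
    obtain ⟨hu, hc⟩ := 𝒢.prod_sandwich hsb hzu hzc hstu hstc
    refine ⟨?_, hclosed _ hszA t htA, by rw [e]; exact hu, by rw [e]; exact hc⟩
    calc m n z = m (m (m s t) n) z := by rw [hstn]
      _ = m (m s (m t n)) z := by rw [hassoc s hsA t htA n hn]
      _ = m s (m (m t n) z) := hassoc s hsA (m t n) htnA' z hzA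
      _ = m s (m z (m t n)) := by rw [comm]
      _ = m (m s z) (m t n) := (hassoc s hsA z hzA (m t n) htnA').symm
      _ = m (m (m s z) t) n := (hassoc (m s z) hszA t htA n hn).symm
  have key2 : ∀ z, z ∈ A → pdom z ⊆ 𝒢.unitSpace →
      (∀ g y, z g = some y → y ∈ Set.center Y) →
      m z n = m n (m (m t z) s) ∧ (m (m t z) s ∈ A ∧
        pdom (m (m t z) s) ⊆ 𝒢.unitSpace ∧
        ∀ g y, (m (m t z) s) g = some y → y ∈ Set.center Y) := by
    intro z hzA hzu hzc
    have hzb := 𝒢.units_bisection hzu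
    have hntA' : m n t ∈ A := hclosed n hn t htA
    have htzA : m t z ∈ A := hclosed t htA z hzA
    have comm : m z (m n t) = m (m n t) z := by
      rw [hagree _ _ (Or.inl hzb), hagree _ _ (Or.inr hzb)]
      exact (𝒢.central_comm hzu hzc cnt).symm
    have e : m (m t z) s = 𝒢.convProd (𝒢.convProd t z) s := by
      rw [hagree t z (Or.inl htb), hagree _ s (Or.inr hsb)]
    obtain ⟨hu, hc⟩ := 𝒢.prod_sandwich htb hzu hzc htsu htsc
    refine ⟨?_, hclosed _ htzA s hsA, by rw [e]; exact hu, by rw [e]; exact hc⟩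
    calc m z n = m z (m n (m t s)) := by rw [hnts]
      _ = m z (m (m n t) s) := by rw [hassoc n hn t htA s hsA]
      _ = m (m z (m n t)) s := (hassoc z hzA (m n t) hntA' s hsA).symm
      _ = m (m (m n t) z) s := by rw [comm]
      _ = m (m n (m t z)) s := by rw [hassoc n hn t htA z hzA]
      _ = m n (m (m t z) s) := hassoc n hn (m t z) htzA s hsA
  ext x
  simp only [Set.mem_setOf_eq]
  constructor
  · rintro ⟨z, hz, rfl⟩
    obtain ⟨hzA, hzu, hzc⟩ := hz
    obtain ⟨heq, hmem⟩ := key1 z hzA hzu hzc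
    exact ⟨_, hmem, heq⟩
  · rintro ⟨z, hz, rfl⟩
    obtain ⟨hzA, hzu, hzc⟩ := hz
    obtain ⟨heq, hmem⟩ := key2 z hzA hzu hzc
    exact ⟨_, hmem, heq⟩
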